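/- Let m, n, p0, q0, p1, q1 be integers with n ≠ 0, p0 ≥ 2 and gcd(p0, q0) = 1. If (m - n*p0*q0)^2 = 1 and (m - n*p0^2*p1*q1)^2 = 1, then p0 = 2, n^2 = 1, and m*n = 4*p1*q1 + 1 or m*n = 4*p1*q1 - 1. -/

import Mathlib

/-!
Write `a = m - n p₀ q₀` and `b = m - n p₀² p₁ q₁`, both `±1`. If `a = b`, then cancelling
`n p₀` gives `q₀ = p₀ p₁ q₁`, so `p₀ ∣ q₀`, impossible for `p₀ ≥ 2` coprime to `q₀`.
Hence `a - b = n p₀ (p₀ p₁ q₁ - q₀) = ±2`, which forces `p₀ = 2` and `n = ±1`;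
then `m n - 4 p₁ q₁ = b n = ±1`.
-/

theorem eq_or_sq_sub_eq_four_of_sq_eq_one {R : Type*} [Ring R] [NoZeroDivisors R] {a b : R}
    (ha : a ^ 2 = 1) (hb : b ^ 2 = 1) : a = b ∨ (a - b) ^ 2 = 4 := by
  rcases sq_eq_one_iff.mp ha with rfl | rfl <;> rcases sq_eq_one_iff.mp hb with rfl | rfl <;>
    norm_num

theorem Int.not_dvd_of_gcd_eq_one {p q : ℤ} (hp : 2 ≤ p) (hpq : Int.gcd p q = 1) : ¬p ∣ q := by
  intro hdvd
  have hunit : IsUnit p := (Int.isCoprime_iff_gcd_eq_one.mpr hpq).isUnit_of_dvd' dvd_rfl hdvd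
  rcases Int.isUnit_iff.mp hunit with h | h <;> omega

theorem Int.eq_two_and_sq_eq_one_of_sq_mul_eq_four {p k : ℤ} (hp : 2 ≤ p)
    (h : (p * k) ^ 2 = 4) : p = 2 ∧ k ^ 2 = 1 := by
  have hk : k ^ 2 ≠ 0 := fun hk => by simp [mul_pow, hk] at h
  have hk_pos : 0 < k ^ 2 := (sq_nonneg k).lt_of_ne' hk
  rw [mul_pow] at h
  have hp2 : p = 2 := by nlinarith
  subst hp2
  exact ⟨rfl, by linarith⟩

theorem stmt_7 (m n p0 q0 p1 q1 : ℤ) (hn : n ≠ 0) (hp0 : p0 ≥ 2)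
    (hgcd : Int.gcd p0 q0 = 1)
    (h1 : (m - n * p0 * q0) ^ 2 = 1)
    (h2 : (m - n * p0 ^ 2 * p1 * q1) ^ 2 = 1) :
    p0 = 2 ∧ n ^ 2 = 1 ∧ (m * n = 4 * p1 * q1 + 1 ∨ m * n = 4 * p1 * q1 - 1) := by
  rcases eq_or_sq_sub_eq_four_of_sq_eq_one h1 h2 with heq | hsq
  · have hnp0 : n * p0 ≠ 0 := mul_ne_zero hn (by omega)
    have hdvd : p0 ∣ q0 :=
      ⟨p1 * q1, mul_left_cancel₀ hnp0 (by linear_combination -heq)⟩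
    exact absurd hdvd (Int.not_dvd_of_gcd_eq_one hp0 hgcd)
  · obtain ⟨rfl, hk⟩ := Int.eq_two_and_sq_eq_one_of_sq_mul_eq_four hp0
      (k := n * (p0 * p1 * q1 - q0)) (by linear_combination hsq)
    have hn1 : n ^ 2 = 1 :=
      Int.eq_one_of_mul_eq_one_right (b := (2 * p1 * q1 - q0) ^ 2) (sq_nonneg n)
        (by linear_combination hk)
    have hmn : m * n - 4 * p1 * q1 = (m - n * 2 ^ 2 * p1 * q1) * n := by
      linear_combination 4 * p1 * q1 * hn1
    have hmn_sq : (m * n - 4 * p1 * q1) ^ 2 = 1 := by rw [hmn, mul_pow, h2, hn1, one_mul]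
    refine ⟨rfl, hn1, ?_⟩
    rcases sq_eq_one_iff.mp hmn_sq with h | h
    · exact Or.inl (by linarith)
    · exact Or.inr (by linarith)
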